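/- arXiv:1909.02810 — 4 statements merged into one kernel-verified Lean document; each statement's English description precedes it below -/
import Mathlib

section
/- The grounded extension of an abstract argumentation framework is conflict-free: if E is the least fixpoint of the characteristic function F (where F(S) is the set of arguments defended by S), then no argument in E attacks an argument in E. -/
/-- An argument `a` is defended by `S`: every attacker of `a` is attacked by some member of `S`. -/
def defends {A : Type*} (att : A → A → Prop) (S : Set A) (a : A) : Prop :=
  ∀ b, att b a → ∃ c ∈ S, att c b

/-- The characteristic function `F`. -/
def Fop {A : Type*} (att : A → A → Prop) (S : Set A) : Set A := {a | defends att S a}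

/-- A set of arguments is conflict-free. -/
def conflictFree {A : Type*} (att : A → A → Prop) (S : Set A) : Prop :=
  ∀ a ∈ S, ∀ b ∈ S, ¬ att a b

/-- A set of arguments is admissible. -/
def admissible {A : Type*} (att : A → A → Prop) (S : Set A) : Prop :=
  conflictFree att S ∧ ∀ a ∈ S, defends att S a

/-!
Let `E` be the least fixed point of `F`. The arguments of `E` that attack no member of `E` form
a prefixed point of `F`: if `a` is defended by them and attacks some `b ∈ E = F E`, then `E`
contains an attacker `c` of `a`, which in turn is attacked by an argument of `E` attacking no
member of `E`, absurd. By Knaster–Tarski `E` lies below every prefixed point, so no member of `E`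
attacks a member of `E`.
-/

theorem OrderHom.le_of_isLeast_fixedPoints {α : Type*} [CompleteLattice α] (f : α →o α)
    {x y : α} (hx : IsLeast (Function.fixedPoints f) x) (hy : f y ≤ y) : x ≤ y :=
  f.isLeast_lfp.unique hx ▸ f.lfp_le hy

section Argumentation

variable {A : Type*} (att : A → A → Prop)

theorem Fop_mono : Monotone (Fop att) := fun _ _ hST _ ha b hb =>
  let ⟨c, hc, hcb⟩ := ha b hb
  ⟨c, hST hc, hcb⟩

def FopHom : Set A →o Set A := ⟨Fop att, Fop_mono att⟩

theorem Fop_nonAttacking_subset {E : Set A} (hfix : Fop att E = E) :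
    Fop att {a ∈ E | ∀ b ∈ E, ¬ att a b} ⊆ {a ∈ E | ∀ b ∈ E, ¬ att a b} := by
  intro a ha
  have haE : a ∈ E := hfix.le (Fop_mono att (fun _ hx => hx.1) ha)
  refine ⟨haE, fun b hbE hab => ?_⟩
  obtain ⟨c, hcE, hca⟩ := hfix.ge hbE a hab
  obtain ⟨d, hd, hdc⟩ := ha c hca
  exact hd.2 c hcE hdc

end Argumentation

/-- The grounded extension (least fixpoint of `F`) is conflict-free. -/
theorem grounded_conflictFree {A : Type*} (att : A → A → Prop) (E : Set A)
    (hfix : Fop att E = E) (hleast : ∀ S, Fop att S = S → E ⊆ S) :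
    ∀ a ∈ E, ∀ b ∈ E, ¬ att a b := by
  have hE : IsLeast (Function.fixedPoints (FopHom att)) E := ⟨hfix, fun S hS => hleast S hS⟩
  have hsub : E ⊆ {a ∈ E | ∀ b ∈ E, ¬ att a b} :=
    (FopHom att).le_of_isLeast_fixedPoints hE (Fop_nonAttacking_subset att hfix)
  exact fun a ha => (hsub ha).2
end

section
/- The grounded extension of an abstract argumentation framework is admissible: it is conflict-free and every element of the grounded extension is defended by the grounded extension. -/
/-!
Defence is immediate from `F E = E`. For conflict-freeness, let `U ⊆ E` be the members of `E`
attacked by no member of `E`. Then `F U ⊆ U`: an argument defended by `U` lies in `E`, and an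
attacker `b ∈ E` of it would be counter-attacked by some `c ∈ U`, which `b`, being defended by `E`,
forces to be attacked from `E`. Since the least fixpoint of a monotone map lies below every
prefixpoint (Knaster–Tarski), `E ⊆ U`, i.e. no member of `E` is attacked from `E`.
-/

theorem OrderHom.le_of_map_le_of_forall_fixed_le {α : Type*} [CompleteLattice α] (f : α →o α)
    {x y : α} (hx : ∀ z, f z = z → x ≤ z) (hy : f y ≤ y) : x ≤ y :=
  (hx _ f.map_lfp).trans (f.lfp_le hy)

section Argumentation

variable {A : Type*} (att : A → A → Prop)

def unattackedIn (E : Set A) : Set A := {a | a ∈ E ∧ ∀ b ∈ E, ¬ att b a}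

theorem conflictFree_of_subset_unattackedIn {E : Set A} (h : E ⊆ unattackedIn att E) :
    conflictFree att E :=
  fun a ha _ hb hab => (h hb).2 a ha hab

theorem Fop_unattackedIn_subset {E : Set A} (hfix : Fop att E = E) :
    Fop att (unattackedIn att E) ⊆ unattackedIn att E := by
  intro a ha
  have haE : a ∈ E := hfix ▸ Fop_mono att (fun _ hx => hx.1) ha
  refine ⟨haE, fun b hbE hba => ?_⟩
  obtain ⟨c, hcU, hcb⟩ := ha b hba
  rw [← hfix] at hbE
  obtain ⟨d, hdE, hdc⟩ := hbE c hcb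
  exact hcU.2 d hdE hdc

end Argumentation

/-- The grounded extension (least fixpoint of `F`) is admissible. -/
theorem grounded_admissible {A : Type*} (att : A → A → Prop) (E : Set A)
    (hfix : Fop att E = E) (hleast : ∀ S, Fop att S = S → E ⊆ S) :
    admissible att E := by
  have hunattacked : E ⊆ unattackedIn att E :=
    (FopHom att).le_of_map_le_of_forall_fixed_le hleast (Fop_unattackedIn_subset att hfix)
  refine ⟨conflictFree_of_subset_unattackedIn att hunattacked, fun a ha => ?_⟩
  rw [← hfix] at ha
  exact ha
end

section
/- In a finite abstract argumentation framework, an argument A belongs to the grounded extension if and only if the proponent has a winning strategy in the grounded argument game starting with A, where the proponent must move strict defeaters without repeating its own arguments and the opponent may move any defeater. -/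
/-- The proponent has a winning strategy in the grounded argument game from a
history (head = most recently moved argument, moved by the proponent; the
proponent's moves are the even-indexed entries of the history).  After each
opponent move (any defeater of the last argument), the proponent can answer
with a strict defeater it has not moved before, and win from the extended
history. -/
inductive PWins {A : Type*} (defeat : A → A → Prop) : List A → Prop
  | mk (x : A) (hist : List A)
      (reply : ∀ c, defeat c x → A)
      (hstrict : ∀ c (hc : defeat c x),
        defeat (reply c hc) c ∧ ¬ defeat c (reply c hc))
      (hnorep : ∀ c (hc : defeat c x) (i : ℕ),
        (x :: hist)[2 * i]? ≠ some (reply c hc))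
      (hwin : ∀ c (hc : defeat c x),
        PWins defeat (reply c hc :: c :: x :: hist)) :
      PWins defeat (x :: hist)

section Aux

variable {A : Type*} (defeat : A → A → Prop)

/-- Iterates of the defense operator starting from the empty set. -/
def iterF : ℕ → Set A
  | 0 => ∅
  | n + 1 => Fop defeat (iterF n)

lemma Fop_mono_s12 {S T : Set A} (h : S ⊆ T) : Fop defeat S ⊆ Fop defeat T := by
  intro a ha b hb
  obtain ⟨c, hc, hcb⟩ := ha b hb
  exact ⟨c, h hc, hcb⟩

lemma iterF_succ_mono (n : ℕ) : iterF defeat n ⊆ iterF defeat (n + 1) := by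
  induction n with
  | zero => simp [iterF]
  | succ n ih => exact Fop_mono_s12 defeat ih

lemma iterF_mono {m n : ℕ} (h : m ≤ n) : iterF defeat m ⊆ iterF defeat n := by
  induction h with
  | refl => exact subset_rfl
  | step _ ih => exact ih.trans (iterF_succ_mono defeat _)

/-- The rank of an argument: the least stage at which it appears. -/
noncomputable def rk (a : A) : ℕ := sInf {n | a ∈ iterF defeat n}

lemma rk_mem {a : A} (h : ∃ n, a ∈ iterF defeat n) : a ∈ iterF defeat (rk defeat a) :=
  Nat.sInf_mem h

lemma rk_le {a : A} {m : ℕ} (h : a ∈ iterF defeat m) : rk defeat a ≤ m :=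
  Nat.sInf_le h

lemma rk_pos {a : A} (h : ∃ n, a ∈ iterF defeat n) : 0 < rk defeat a := by
  rcases Nat.eq_zero_or_pos (rk defeat a) with h0 | hp
  · have := rk_mem defeat h
    rw [h0] at this
    exact absurd this (by simp [iterF])
  · exact hp

/-- The union of the iterates is a fixpoint of `Fop` (uses finiteness). -/
lemma U_fixpoint [Fintype A] :
    Fop defeat {a | ∃ n, a ∈ iterF defeat n} = {a | ∃ n, a ∈ iterF defeat n} := by
  classical
  apply Set.Subset.antisymm
  · intro a ha
    set g : A → ℕ := fun b =>
      if h : ∃ n, ∃ c ∈ iterF defeat n, defeat c b then Nat.find h else 0 with hg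
    refine ⟨Finset.univ.sup g + 1, ?_⟩
    intro b hb
    obtain ⟨c, ⟨n, hcn⟩, hcb⟩ := ha b hb
    have hex : ∃ n, ∃ c ∈ iterF defeat n, defeat c b := ⟨n, c, hcn, hcb⟩
    obtain ⟨c', hc', hc'b⟩ := Nat.find_spec hex
    have hgb : g b = Nat.find hex := by simp [hg, hex]
    have hle : g b ≤ Finset.univ.sup g := Finset.le_sup (Finset.mem_univ b)
    exact ⟨c', iterF_mono defeat (hgb ▸ hle) hc', hc'b⟩
  · rintro a ⟨n, hn⟩
    cases n with
    | zero => exact absurd hn (by simp [iterF])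
    | succ m =>
      exact Fop_mono_s12 defeat
        (show iterF defeat m ⊆ {a | ∃ n, a ∈ iterF defeat n} from fun y hy => ⟨m, hy⟩) hn

/-- Pick a minimal-rank defeater of `c` among the iterates: it strictly
defeats `c` and has rank bounded by any stage containing a defeater of `c`. -/
lemma pick {c : A} (h : ∃ n, ∃ e ∈ iterF defeat n, defeat e c) :
    ∃ e, (∃ n, e ∈ iterF defeat n) ∧ defeat e c ∧ ¬ defeat c e ∧
      ∀ m e', e' ∈ iterF defeat m → defeat e' c → rk defeat e ≤ m := by
  obtain ⟨e, he, hec⟩ := Nat.sInf_mem h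
  set k := sInf {n | ∃ e ∈ iterF defeat n, defeat e c} with hk
  have heU : ∃ n, e ∈ iterF defeat n := ⟨k, he⟩
  have hk_le : ∀ m e', e' ∈ iterF defeat m → defeat e' c → k ≤ m :=
    fun m e' h1 h2 => Nat.sInf_le ⟨e', h1, h2⟩
  have hrk : rk defeat e = k :=
    le_antisymm (rk_le defeat he) (hk_le _ _ (rk_mem defeat heU) hec)
  refine ⟨e, heU, hec, ?_, fun m e' h1 h2 => hrk ▸ hk_le m e' h1 h2⟩
  intro hce
  have hpos := rk_pos defeat heU
  obtain ⟨j, hj⟩ : ∃ j, rk defeat e = j + 1 := ⟨rk defeat e - 1, by omega⟩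
  have hmem := rk_mem defeat heU
  rw [hj] at hmem
  obtain ⟨f, hf, hfc⟩ := hmem c hce
  have := hk_le j f hf hfc
  omega

/-- Soundness: from an argument in some iterate, with all earlier proponent
moves of strictly larger rank, the proponent wins. -/
lemma sound : ∀ n x (hist : List A), (∃ m, x ∈ iterF defeat m) → rk defeat x ≤ n →
    (∀ i y, hist[2 * i + 1]? = some y → rk defeat x < rk defeat y) →
    PWins defeat (x :: hist) := by
  intro n
  induction n using Nat.strong_induction_on with
  | _ n ih =>
  intro x hist hxU hxn hinv
  have hx := rk_mem defeat hxU
  have hpos := rk_pos defeat hxU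
  obtain ⟨m, hm⟩ : ∃ m, rk defeat x = m + 1 := ⟨rk defeat x - 1, by omega⟩
  rw [hm] at hx
  have hrep : ∀ c, defeat c x → ∃ e, (∃ n, e ∈ iterF defeat n) ∧ defeat e c ∧
      ¬ defeat c e ∧ rk defeat e ≤ m := by
    intro c hc
    obtain ⟨e0, he0, he0c⟩ := hx c hc
    obtain ⟨e, heU, hec, hnce, hmin⟩ := pick defeat ⟨m, e0, he0, he0c⟩
    exact ⟨e, heU, hec, hnce, hmin m e0 he0 he0c⟩
  choose reply hU hdef hnd hle using hrep
  have hlt : ∀ c (hc : defeat c x), rk defeat (reply c hc) < rk defeat x := by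
    intro c hc
    have := hle c hc
    omega
  refine PWins.mk x hist reply (fun c hc => ⟨hdef c hc, hnd c hc⟩) ?_ ?_
  · intro c hc i heq
    cases i with
    | zero =>
      simp only [Nat.mul_zero, List.getElem?_cons_zero, Option.some.injEq] at heq
      have := hlt c hc
      rw [heq] at this
      omega
    | succ j =>
      have h2 : 2 * (j + 1) = (2 * j + 1) + 1 := by omega
      rw [h2, List.getElem?_cons_succ] at heq
      have h3 := hinv j _ heq
      have := hlt c hc
      omega
  · intro c hc
    refine ih (rk defeat (reply c hc)) (lt_of_lt_of_le (hlt c hc) hxn)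
      (reply c hc) (c :: x :: hist) (hU c hc) le_rfl ?_
    intro i y hy
    cases i with
    | zero =>
      simp only [Nat.mul_zero, Nat.zero_add, List.getElem?_cons_succ,
        List.getElem?_cons_zero, Option.some.injEq] at hy
      rw [← hy]
      exact hlt c hc
    | succ j =>
      have h2 : 2 * (j + 1) + 1 = ((2 * j + 1) + 1) + 1 := by omega
      rw [h2, List.getElem?_cons_succ, List.getElem?_cons_succ] at hy
      exact (hlt c hc).trans (hinv j y hy)

/-- Completeness: a winning strategy for the proponent forces the head of the
history into any fixpoint of the defense operator. -/
lemma complete (E : Set A) (hfix : Fop defeat E = E) :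
    ∀ l, PWins defeat l → ∀ x (hist : List A), l = x :: hist → x ∈ E := by
  intro l h
  induction h with
  | mk x hist reply hstrict hnorep hwin ih =>
    intro x' hist' heq
    injection heq with h1 h2
    subst h1
    subst h2
    by_contra hx
    have hnd : ¬ defends defeat E x := fun hd => hx (hfix ▸ (hd : x ∈ Fop defeat E))
    obtain ⟨c, hc, hcE⟩ : ∃ c, defeat c x ∧ ∀ e ∈ E, ¬ defeat e c := by
      by_contra hcon
      push_neg at hcon
      exact hnd fun b hb => hcon b hb
    have hmem := ih c hc (reply c hc) (c :: x :: hist) rfl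
    exact hcE _ hmem (hstrict c hc).1

end Aux

/-- in a finite argumentation framework, an argument belongs to
the grounded extension iff the proponent has a winning strategy in the
grounded argument game beginning with it. -/
theorem grounded_iff_game {A : Type*} [Fintype A] (defeat : A → A → Prop)
    (E : Set A) (hfix : Fop defeat E = E)
    (hleast : ∀ S, Fop defeat S = S → E ⊆ S) :
    ∀ a : A, a ∈ E ↔ PWins defeat [a] := by
  intro a
  constructor
  · intro ha
    have hU : ∃ n, a ∈ iterF defeat n := hleast _ (U_fixpoint defeat) ha
    exact sound defeat (rk defeat a) a [] hU le_rfl (by intro i y h; simp at h)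
  · intro h
    exact complete defeat E hfix [a] h a [] rfl
end

section
/- In DeLP, no literal having a strict derivation from Π has a counterargument: if L is strictly derivable from Π, then there is no DeLP argument ⟨B, Q⟩ such that Q and L disagree relative to Π. -/
/-- Literals: atoms with a sign; `(a, true)` is the positive literal. -/
abbrev Lit (α : Type) := α × Bool

/-- Symmetric negation on literals. -/
def neg {α : Type} (l : Lit α) : Lit α := (l.1, !l.2)

/-- An inference rule with a list of antecedents and a consequent. -/
structure Rule (α : Type) where
  ant : List (Lit α)
  cons : Lit α

/-- Closure of a set `S` of literals under a set `R` of rules: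
`Cl R S l` holds iff `l` is derivable from `S` by chaining rules of `R`. -/
inductive Cl {α : Type} (R : Set (Rule α)) (S : Set (Lit α)) : Lit α → Prop
  | base {l : Lit α} : l ∈ S → Cl R S l
  | step {r : Rule α} : r ∈ R → (∀ a ∈ r.ant, Cl R S a) → Cl R S r.cons

/-- An ASPIC+ argumentation system plus knowledge base: knowledge base `K`,
strict rules `Rs` and defeasible rules `Rd`. -/
structure Theory (α : Type) where
  K : Set (Lit α)
  Rs : Set (Rule α)
  Rd : Set (Rule α)

/-- Untyped argument trees: a premise, or a rule applied to subargument trees. -/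
inductive Arg (α : Type) where
  | prem : Lit α → Arg α
  | node : Rule α → List (Arg α) → Arg α

/-- The conclusion of an argument. -/
def Arg.conc {α : Type} : Arg α → Lit α
  | .prem l => l
  | .node r _ => r.cons

/-- Well-formed ASPIC+ arguments over a theory: premises come from `K`, and
each applied rule is a strict or defeasible rule whose antecedents are the
conclusions of the immediate subarguments. -/
inductive WF {α : Type} (T : Theory α) : Arg α → Prop
  | prem {l : Lit α} : l ∈ T.K → WF T (.prem l)
  | node {r : Rule α} {args : List (Arg α)} :
      (r ∈ T.Rs ∨ r ∈ T.Rd) → args.map Arg.conc = r.ant →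
      (∀ a ∈ args, WF T a) → WF T (.node r args)

/-- `SubArg B A`: `B` is a subargument of `A`. -/
inductive SubArg {α : Type} : Arg α → Arg α → Prop
  | refl (A : Arg α) : SubArg A A
  | child {B A : Arg α} {r : Rule α} {args : List (Arg α)} :
      A ∈ args → SubArg B A → SubArg B (.node r args)

/-- `RuleIn r A`: rule `r` is used somewhere in argument `A`. -/
inductive RuleIn {α : Type} : Rule α → Arg α → Prop
  | top {r : Rule α} {args : List (Arg α)} : RuleIn r (.node r args)
  | child {r' : Rule α} {A : Arg α} {r : Rule α} {args : List (Arg α)} :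
      A ∈ args → RuleIn r' A → RuleIn r' (.node r args)

/-- `PremIn l A`: literal `l` is used as a premise of argument `A`. -/
inductive PremIn {α : Type} : Lit α → Arg α → Prop
  | prem {l : Lit α} : PremIn l (.prem l)
  | child {l : Lit α} {A : Arg α} {r : Rule α} {args : List (Arg α)} :
      A ∈ args → PremIn l A → PremIn l (.node r args)

/-- The set of defeasible rules used in an argument. -/
def DefRules {α : Type} (T : Theory α) (A : Arg α) : Set (Rule α) :=
  {r | RuleIn r A ∧ r ∈ T.Rd}

/-- An argument is defeasible if it uses some defeasible rule; otherwise strict. -/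
def Defeasible {α : Type} (T : Theory α) (A : Arg α) : Prop :=
  ∃ r, RuleIn r A ∧ r ∈ T.Rd

/-- The set of conclusions of all subarguments of `A`. -/
def ConcSub {α : Type} (A : Arg α) : Set (Lit α) :=
  {l | ∃ B, SubArg B A ∧ B.conc = l}

/-- A set of literals is indirectly consistent (relative to the strict rules of `T`). -/
def IndCons {α : Type} (T : Theory α) (S : Set (Lit α)) : Prop :=
  ¬ ∃ l, Cl T.Rs S l ∧ Cl T.Rs S (neg l)

/-- ASPIC+ (restricted) rebut: `A` rebuts `B` on a subargument with a
defeasible top rule whose consequent is the negation of `A`'s conclusion. -/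
def rebuts {α : Type} (T : Theory α) (A B : Arg α) : Prop :=
  ∃ (r : Rule α) (args : List (Arg α)),
    SubArg (.node r args) B ∧ r ∈ T.Rd ∧ A.conc = neg r.cons

/-- Unrestricted rebut: `A` u-rebuts `B` on a defeasible subargument. -/
def uRebuts {α : Type} (T : Theory α) (A B : Arg α) : Prop :=
  ∃ B', SubArg B' B ∧ Defeasible T B' ∧ A.conc = neg B'.conc

/-- dlp-rebut: `A` dlp-rebuts `B` iff for some subargument `B'` of `B`
the set `{Conc A, Conc B'} ∪ K` is indirectly inconsistent. -/
def dlpRebuts {α : Type} (T : Theory α) (A B : Arg α) : Prop :=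
  ∃ B', SubArg B' B ∧ ¬ IndCons T ({A.conc, B'.conc} ∪ T.K)

/-- A defeasible logic program `(Π, Δ)`: facts and strict rules (`Π`)
and defeasible rules, including presumptions (`Δ`). -/
structure Program (α : Type) where
  facts : Set (Lit α)
  strict : Set (Rule α)
  defeasible : Set (Rule α)

/-- Defeasible derivability of a literal from `Π ∪ R`. -/
def Derives {α : Type} (P : Program α) (R : Set (Rule α)) (l : Lit α) : Prop :=
  Cl (P.strict ∪ R) P.facts l

/-- `Π ∪ R` is contradictory: a complementary pair is defeasibly derivable. -/
def Contradictory {α : Type} (P : Program α) (R : Set (Rule α)) : Prop :=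
  ∃ h, Derives P R h ∧ Derives P R (neg h)

/-- `⟨R, p⟩` is a DeLP argument: `R ⊆ Δ`, `p` is defeasibly derivable from
`Π ∪ R`, `Π ∪ R` is non-contradictory, and `R` is ⊆-minimal with these properties. -/
def DeLPArg {α : Type} (P : Program α) (R : Set (Rule α)) (p : Lit α) : Prop :=
  R ⊆ P.defeasible ∧ Derives P R p ∧ ¬ Contradictory P R ∧
    ∀ R' : Set (Rule α), R' ⊂ R → ¬ (Derives P R' p ∧ ¬ Contradictory P R')

/-- The ASPIC+ argumentation theory corresponding to a defeasible logic program. -/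
def theoryOf {α : Type} (P : Program α) : Theory α :=
  ⟨P.facts, P.strict, P.defeasible⟩

/-- Literals `l` and `q` disagree relative to `Π`: from `Π ∪ {l, q}` a
complementary pair is strictly derivable. -/
def Disagree {α : Type} (P : Program α) (l q : Lit α) : Prop :=
  ∃ h, Cl P.strict (P.facts ∪ {l, q}) h ∧ Cl P.strict (P.facts ∪ {l, q}) (neg h)

/-- `Π` is non-contradictory: no complementary pair is strictly derivable. -/
def NonContradictory {α : Type} (P : Program α) : Prop :=
  ¬ ∃ h, Cl P.strict P.facts h ∧ Cl P.strict P.facts (neg h)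

theorem Cl.cut {α : Type} {R R' : Set (Rule α)} {S S' : Set (Lit α)} {l : Lit α}
    (h : Cl R S l) (hR : R ⊆ R') (hS : ∀ s ∈ S, Cl R' S' s) : Cl R' S' l := by
  induction h with
  | base hl => exact hS _ hl
  | step hr _ ih => exact Cl.step (hR hr) ih

theorem Derives.of_strict {α : Type} {P : Program α} {R : Set (Rule α)} {l : Lit α}
    (hl : Cl P.strict P.facts l) : Derives P R l :=
  hl.cut Set.subset_union_left fun _ hs => Cl.base hs

theorem Contradictory.of_disagree {α : Type} {P : Program α} {R : Set (Rule α)}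
    {l q : Lit α} (hl : Derives P R l) (hq : Derives P R q) (hlq : Disagree P l q) :
    Contradictory P R := by
  obtain ⟨h, hpos, hneg⟩ := hlq
  have hbase : ∀ s ∈ P.facts ∪ {l, q}, Derives P R s := by
    rintro s (hs | rfl | rfl)
    · exact Cl.base hs
    · exact hl
    · exact hq
  exact ⟨h, hpos.cut Set.subset_union_left hbase, hneg.cut Set.subset_union_left hbase⟩

theorem strict_derivation_no_counterargument_general {α : Type} (P : Program α)
    (L : Lit α)
    (hL : Cl P.strict P.facts L) :
    ¬ ∃ (B : Set (Rule α)) (Q : Lit α), DeLPArg P B Q ∧ Disagree P L Q := by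
  rintro ⟨B, Q, ⟨-, hQ, hB, -⟩, hLQ⟩
  exact hB (.of_disagree (.of_strict hL) hQ hLQ)

/-- no literal strictly derivable from `Π` has a
counterargument: no DeLP argument concludes a literal disagreeing with it. -/
theorem strict_derivation_no_counterargument {α : Type} (P : Program α)
    (hnc : NonContradictory P) (L : Lit α)
    (hL : Cl P.strict P.facts L) :
    ¬ ∃ (B : Set (Rule α)) (Q : Lit α), DeLPArg P B Q ∧ Disagree P L Q :=
  strict_derivation_no_counterargument_general P L hL
end
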